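/- arXiv:math/0501493 — 5 statements merged into one kernel-verified Lean document; each statement's English description precedes it below -/
import Mathlib

section
/- Let n ≥ 1 and let x_1, …, x_N be unit vectors in Euclidean space ℝ^n with ⟨x_i, x_j⟩ ≤ cos α for all i ≠ j (a spherical (n,N,α)-code). Let c > 0 and let f : [-1,1] → ℝ be a function such that (i) ∑_{i,j=1}^N f(⟨x_i,x_j⟩) ≥ 0, (ii) f(t) + c ≤ 0 for all t with -1 ≤ t ≤ cos α, and (iii) f(1) + c ≤ 1. Then N ≤ 1/c. -/
open scoped RealInnerProductSpace BigOperators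

/-- Delsarte-type bound (Theorem 1): for a spherical `(n,N,α)`-code and a function `f`
satisfying the three conditions, `N ≤ 1/c`. -/
theorem delsarte_bound (n N : ℕ) (hn : 1 ≤ n) (α : ℝ)
    (x : Fin N → EuclideanSpace ℝ (Fin n))
    (hx : ∀ i, ‖x i‖ = 1)
    (hsep : ∀ i j, i ≠ j → ⟪x i, x j⟫ ≤ Real.cos α)
    (c : ℝ) (hc : 0 < c) (f : ℝ → ℝ)
    (h1 : 0 ≤ ∑ i, ∑ j, f ⟪x i, x j⟫)
    (h2 : ∀ t : ℝ, -1 ≤ t → t ≤ Real.cos α → f t + c ≤ 0)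
    (h3 : f 1 + c ≤ 1) :
    (N : ℝ) ≤ 1 / c := by
  rcases Nat.eq_zero_or_pos N with h0 | hN
  · subst h0; simp; positivity
  have key : ∀ i j : Fin N, f ⟪x i, x j⟫ ≤ if i = j then f 1 else -c := by
    intro i j
    by_cases hij : i = j
    · subst hij
      have : ⟪x i, x i⟫ = 1 := by
        rw [real_inner_self_eq_norm_sq, hx i]; norm_num
      rw [this]; simp
    · have hb := abs_real_inner_le_norm (x i) (x j)
      rw [hx i, hx j] at hb
      rw [one_mul] at hb
      have hlo : (-1 : ℝ) ≤ ⟪x i, x j⟫ := (abs_le.mp hb).1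
      have := h2 ⟪x i, x j⟫ hlo (hsep i j hij)
      rw [if_neg hij]
      linarith
  have hsum : ∑ i, ∑ j, f ⟪x i, x j⟫ ≤
      ∑ i : Fin N, ∑ j : Fin N, (if i = j then f 1 else -c) := by
    refine Finset.sum_le_sum fun i _ => Finset.sum_le_sum fun j _ => key i j
  have hrhs : ∑ i : Fin N, ∑ j : Fin N, (if i = j then f 1 else -c)
      = N * f 1 + (N * (N - 1)) * (-c) := by
    have : ∀ i : Fin N, ∑ j : Fin N, (if i = j then f 1 else -c)
        = f 1 + ((N : ℝ) - 1) * (-c) := by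
      intro i
      have heq : (fun j : Fin N => if i = j then f 1 else -c)
          = fun j => (if i = j then f 1 + c else 0) + (-c) := by
        funext j; split <;> ring
      rw [heq, Finset.sum_add_distrib, Finset.sum_ite_eq Finset.univ i fun _ => f 1 + c]
      simp
      ring
    rw [Finset.sum_congr rfl fun i _ => this i]
    simp
    ring
  have hN1 : (1 : ℝ) ≤ N := by exact_mod_cast hN
  have h0' : (0 : ℝ) ≤ N * f 1 + (N * (N - 1)) * (-c) := by
    rw [← hrhs]; linarith
  have hf1 : f 1 ≤ 1 - c := by linarith
  have : (N : ℝ) * N * c ≤ N := by nlinarith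
  rw [le_div_iff₀ hc]
  nlinarith
end

section
/- Let 0 < β < π/2 and define g_β : [-1,1] → ℝ by g_β(t) = -1 for -1 ≤ t < -cos(β/2), g_β(t) = 0 for -cos(β/2) ≤ t ≤ cos β, and g_β(t) = 1 for cos β < t ≤ 1. Then for every n ≥ 1 and every finite sequence x_1, …, x_N of unit vectors in ℝ^n, one has ∑_{i,j=1}^N g_β(⟨x_i,x_j⟩) ≥ 0. -/
/-!
Split the sum as (number of positive pairs) − (number of negative pairs), where `(i, j)` is
negative when `⟪x i, x j⟫ < -cos (β / 2)` and positive when `cos β < ⟪x i, x j⟫`. If `(i, j)` and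
`(j, k)` are negative, then `x i` and `x k` both make an angle `< β / 2` with `-x j`, so by the
triangle inequality for angles `(i, k)` is positive. Hence every negative neighbour `j` of `i`
has negative degree `d j` at most the positive degree `p i`, and
`∑ p i ≥ ∑ᵢ ∑_{j ~ i} d j / d i ≥ ∑ d i`, the last step by symmetrising and `d j / d i + d i / d j ≥ 2`.
-/

open scoped RealInnerProductSpace
open Real Finset InnerProductGeometry

theorem two_le_div_add_div {a b : ℝ} (ha : 0 < a) (hb : 0 < b) : 2 ≤ a / b + b / a := by
  rw [div_add_div _ _ hb.ne' ha.ne', le_div_iff₀ (mul_pos hb ha)]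
  nlinarith [sq_nonneg (a - b)]

section Relation

variable {ι : Type*} [Fintype ι] {r : ι → ι → Prop} [DecidableRel r]

theorem sum_card_filter_le_sum_sum_div (hr : ∀ i j, r i j → r j i) (f : ι → ℝ)
    (hf : ∀ i j, r i j → 0 < f i) :
    ∑ i, (#{j | r i j} : ℝ) ≤ ∑ i, ∑ j ∈ {j | r i j}, f j / f i := by
  have hswap : ∑ i, ∑ j ∈ {j | r i j}, f j / f i = ∑ i, ∑ j ∈ {j | r i j}, f i / f j := by
    simp only [sum_filter]
    rw [sum_comm]
    exact sum_congr rfl fun i _ => sum_congr rfl fun j _ => if_congr ⟨hr j i, hr i j⟩ rfl rfl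
  have hamgm : ∑ i, ∑ j ∈ {j | r i j}, (2 : ℝ) ≤
      ∑ i, ∑ j ∈ {j | r i j}, (f j / f i + f i / f j) :=
    sum_le_sum fun i _ => sum_le_sum fun j hj =>
      have hij : r i j := (mem_filter.1 hj).2
      two_le_div_add_div (hf j i (hr i j hij)) (hf i j hij)
  simp only [sum_const, nsmul_eq_mul, sum_add_distrib, ← hswap] at hamgm
  rw [← sum_mul] at hamgm
  linarith

theorem sum_card_filter_le_of_comp_le (hr : ∀ i j, r i j → r j i)
    {p : ι → ι → Prop} [DecidableRel p]
    (hrp : ∀ i j k, r i j → r j k → p i k) :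
    ∑ i, #{j | r i j} ≤ ∑ i, #{j | p i j} := by
  set d : ι → ℝ := fun i => #{j | r i j}
  have hd_le : ∀ i j, r i j → d j ≤ #{k | p i k} := fun i j hij =>
    Nat.cast_le.2 <| card_le_card fun k hk =>
      mem_filter.2 ⟨mem_univ k, hrp i j k hij (mem_filter.1 hk).2⟩
  have hrow : ∀ i, ∑ j ∈ {j | r i j}, d j / d i ≤ #{k | p i k} := fun i => by
    rw [← sum_div]
    refine div_le_of_le_mul₀ (Nat.cast_nonneg _) (Nat.cast_nonneg _) ?_
    calc ∑ j ∈ {j | r i j}, d j ≤ ∑ j ∈ {j | r i j}, (#{k | p i k} : ℝ) :=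
          sum_le_sum fun j hj => hd_le i j (mem_filter.1 hj).2
      _ = #{k | p i k} * d i := by rw [sum_const, nsmul_eq_mul, mul_comm]
  have hd_pos : ∀ i j, r i j → 0 < d i := fun i j hij => by
    simpa [d] using card_pos.2 ⟨j, mem_filter.2 ⟨mem_univ j, hij⟩⟩
  exact_mod_cast (sum_card_filter_le_sum_sum_div hr d hd_pos).trans (sum_le_sum fun i _ => hrow i)

end Relation

section Angle

variable {E : Type*} [NormedAddCommGroup E] [InnerProductSpace ℝ E]

theorem cos_lt_inner_iff_angle_lt {a b : E} (ha : ‖a‖ = 1) (hb : ‖b‖ = 1) {θ : ℝ}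
    (hθ0 : 0 ≤ θ) (hθπ : θ ≤ π) : cos θ < ⟪a, b⟫ ↔ angle a b < θ := by
  rw [inner_eq_cos_angle_of_norm_eq_one ha hb]
  exact strictAntiOn_cos.lt_iff_gt ⟨hθ0, hθπ⟩ ⟨angle_nonneg a b, angle_le_pi a b⟩

theorem cos_lt_inner_of_inner_lt_neg_cos_half {a b y : E} (ha : ‖a‖ = 1) (hb : ‖b‖ = 1)
    (hy : ‖y‖ = 1) {θ : ℝ} (hθ0 : 0 ≤ θ) (hθπ : θ ≤ π)
    (hay : ⟪a, y⟫ < -cos (θ / 2)) (hby : ⟪b, y⟫ < -cos (θ / 2)) : cos θ < ⟪a, b⟫ := by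
  have hy' : ‖-y‖ = 1 := by rwa [norm_neg]
  have hay' : angle a (-y) < θ / 2 := (cos_lt_inner_iff_angle_lt ha hy' (by linarith)
    (by linarith)).1 (by rw [inner_neg_right]; linarith)
  have hby' : angle (-y) b < θ / 2 := by
    rw [angle_comm]
    exact (cos_lt_inner_iff_angle_lt hb hy' (by linarith) (by linarith)).1
      (by rw [inner_neg_right]; linarith)
  exact (cos_lt_inner_iff_angle_lt ha hb hθ0 hθπ).2
    ((angle_le_angle_add_angle a (-y) b).trans_lt (by linarith))

end Angle

theorem gbeta_nonneg_sum_general (β : ℝ) (hβ0 : 0 < β) (hβ : β < π / 2)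
    (g : ℝ → ℝ)
    (hg : ∀ t : ℝ, g t =
      if t < -Real.cos (β / 2) then -1 else if t ≤ Real.cos β then 0 else 1)
    (n N : ℕ)
    (x : Fin N → EuclideanSpace ℝ (Fin n))
    (hx : ∀ i, ‖x i‖ = 1) :
    0 ≤ ∑ i, ∑ j, g ⟪x i, x j⟫ := by
  have hcos_half : 0 < cos (β / 2) := cos_pos_of_mem_Ioo ⟨by linarith [pi_pos], by linarith⟩
  have hcos : 0 < cos β := cos_pos_of_mem_Ioo ⟨by linarith [pi_pos], by linarith⟩
  have hg_split : ∀ t, g t =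
      (if cos β < t then 1 else 0) - (if t < -cos (β / 2) then 1 else 0) := fun t => by
    rw [hg]
    split_ifs <;> linarith
  have hcount := sum_card_filter_le_of_comp_le
    (r := fun i j => ⟪x i, x j⟫ < -cos (β / 2)) (p := fun i j => cos β < ⟪x i, x j⟫)
    (fun i j (hij : ⟪x i, x j⟫ < _) => by rwa [real_inner_comm] at hij)
    (fun i j k hij hjk => cos_lt_inner_of_inner_lt_neg_cos_half (hx i) (hx k) (hx j)
      hβ0.le (by linarith [pi_pos]) hij (by rwa [real_inner_comm]))
  simp only [hg_split, sum_sub_distrib, sum_boole, sub_nonneg]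
  exact_mod_cast hcount

/-- Lemma 5: the step function `g_β` gives nonnegative sums for every finite
set of unit vectors in every dimension. -/
theorem gbeta_nonneg_sum (β : ℝ) (hβ0 : 0 < β) (hβ : β < π / 2)
    (g : ℝ → ℝ)
    (hg : ∀ t : ℝ, g t =
      if t < -Real.cos (β / 2) then -1 else if t ≤ Real.cos β then 0 else 1)
    (n N : ℕ) (hn : 1 ≤ n)
    (x : Fin N → EuclideanSpace ℝ (Fin n))
    (hx : ∀ i, ‖x i‖ = 1) :
    0 ≤ ∑ i, ∑ j, g ⟪x i, x j⟫ :=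
  gbeta_nonneg_sum_general β hβ0 hβ g hg n N x hx
end

section
/- Let 0 ≤ z < 1 (write z = cos α for some angle α ≤ π/2) and define f_α : [-1,1] → ℝ by f_α(t) = (z - t²)/(1 - z) if t < -√z, f_α(t) = 0 if -√z ≤ t ≤ z, and f_α(t) = (t - z)/(1 - z) if t > z. Then for every n ≥ 1, every N ≥ 0, and every sequence x_0, x_1, …, x_N of unit vectors in ℝ^n with ⟨x_i, x_j⟩ ≤ z for all 0 ≤ i < j ≤ N, one has ∑_{i=0}^N f_α(⟨x_0, x_i⟩) ≥ 0. -/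
open scoped RealInnerProductSpace BigOperators

/-- Theorem 9 (main theorem): `f_α ∈ R(n,α)` for all `n`. -/
theorem falpha_nonneg_sum (z : ℝ) (hz0 : 0 ≤ z) (hz1 : z < 1)
    (f : ℝ → ℝ)
    (hf : ∀ t : ℝ, f t =
      if t < -Real.sqrt z then (z - t ^ 2) / (1 - z)
      else if t ≤ z then 0 else (t - z) / (1 - z))
    (n N : ℕ) (hn : 1 ≤ n)
    (x : Fin (N + 1) → EuclideanSpace ℝ (Fin n))
    (hx : ∀ i, ‖x i‖ = 1)
    (hsep : ∀ i j : Fin (N + 1), i < j → ⟪x i, x j⟫ ≤ z) :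
    0 ≤ ∑ i, f ⟪x 0, x i⟫ := by
  have h1z : (0:ℝ) < 1 - z := by linarith
  set t : Fin (N+1) → ℝ := fun i => ⟪x 0, x i⟫ with ht
  have hxx : ∀ i, ⟪x i, x i⟫ = (1:ℝ) := by
    intro i
    rw [real_inner_self_eq_norm_sq, hx i]; norm_num
  have ht0 : t 0 = 1 := hxx 0
  have hts : ∀ i : Fin (N+1), i ≠ 0 → t i ≤ z := by
    intro i hi
    exact hsep 0 i (Fin.pos_of_ne_zero hi)
  set s : Fin (N+1) → ℝ := fun i => t i ^ 2 - z with hs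
  set S : Finset (Fin (N+1)) := Finset.univ.filter (fun i => t i < -Real.sqrt z) with hS
  have hmem : ∀ i, i ∈ S ↔ t i < -Real.sqrt z := by
    intro i; simp [hS]
  have hsqz : Real.sqrt z * Real.sqrt z = z := Real.mul_self_sqrt hz0
  have hsqnn := Real.sqrt_nonneg z
  have hspos : ∀ i ∈ S, 0 < s i := by
    intro i hi
    have h := (hmem i).mp hi
    simp only [hs]
    nlinarith
  set T : ℝ := ∑ i ∈ S, s i with hT
  have hT0 : 0 ≤ T := Finset.sum_nonneg fun i hi => (hspos i hi).le
  set v : Fin (N+1) → EuclideanSpace ℝ (Fin n) := fun i => x i - t i • x 0 with hv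
  have hvv : ∀ i j, ⟪v i, v j⟫ = ⟪x i, x j⟫ - t i * t j := by
    intro i j
    have h1 : ⟪x i, x 0⟫ = t i := real_inner_comm _ _
    have h2 : ⟪x 0, x j⟫ = t j := rfl
    simp only [hv, inner_sub_left, inner_sub_right, real_inner_smul_left,
      real_inner_smul_right, hxx 0, h1, h2]
    ring
  set c : Fin (N+1) → ℝ := fun i => Real.sqrt (s i) with hc
  have hpair : ∀ i ∈ S, ∀ j ∈ S,
      c i * c j * ⟪v i, v j⟫ ≤ -(s i * s j) + (if i = j then s i * (1 - z) else 0) := by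
    intro i hi j hj
    by_cases hij : i = j
    · subst hij
      rw [if_pos rfl]
      have hvvi : ⟪v i, v i⟫ = 1 - t i * t i := by rw [hvv, hxx]
      have hci : c i * c i = s i := Real.mul_self_sqrt (hspos i hi).le
      rw [hvvi]
      have : c i * c i * (1 - t i * t i) = -(s i * s i) + s i * (1 - z) := by
        rw [hci]; simp only [hs]; ring
      linarith [this.le]
    · rw [if_neg hij, add_zero]
      have hxij : ⟪x i, x j⟫ ≤ z := by
        rcases lt_or_gt_of_ne hij with h | h
        · exact hsep i j h
        · rw [real_inner_comm]; exact hsep j i h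
      have hti : t i < -Real.sqrt z := (hmem i).mp hi
      have htj : t j < -Real.sqrt z := (hmem j).mp hj
      have h3 : Real.sqrt z * Real.sqrt z < (-t i) * (-t j) :=
        mul_lt_mul'' (by linarith) (by linarith) hsqnn hsqnn
      have h3' : 0 ≤ t i * t j - z := by nlinarith
      have key : c i * c j ≤ t i * t j - z := by
        have h1 : c i * c j = Real.sqrt (s i * s j) :=
          (Real.sqrt_mul (hspos i hi).le _).symm
        have h2 : s i * s j ≤ (t i * t j - z)^2 := by
          simp only [hs]
          nlinarith [mul_nonneg hz0 (sq_nonneg (t i - t j))]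
        rw [h1]
        calc Real.sqrt (s i * s j) ≤ Real.sqrt ((t i * t j - z)^2) := Real.sqrt_le_sqrt h2
          _ = t i * t j - z := by rw [Real.sqrt_sq h3']
      have hv' : ⟪v i, v j⟫ ≤ -(c i * c j) := by
        rw [hvv]; linarith
      have hcc : 0 ≤ c i * c j :=
        mul_nonneg (Real.sqrt_nonneg _) (Real.sqrt_nonneg _)
      have hcisq : c i * c i = s i := Real.mul_self_sqrt (hspos i hi).le
      have hcjsq : c j * c j = s j := Real.mul_self_sqrt (hspos j hj).le
      nlinarith [mul_le_mul_of_nonneg_left hv' hcc]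
  have hsum : (0:ℝ) ≤ (1 - z) * T - T * T := by
    have hnn : (0:ℝ) ≤ ⟪∑ i ∈ S, c i • v i, ∑ j ∈ S, c j • v j⟫ :=
      real_inner_self_nonneg
    have hexp : ⟪∑ i ∈ S, c i • v i, ∑ j ∈ S, c j • v j⟫
        = ∑ i ∈ S, ∑ j ∈ S, c i * c j * ⟪v i, v j⟫ := by
      rw [sum_inner]
      refine Finset.sum_congr rfl fun i _ => ?_
      rw [inner_sum]
      refine Finset.sum_congr rfl fun j _ => ?_
      rw [real_inner_smul_left, real_inner_smul_right]; ring
    have hle : ∑ i ∈ S, ∑ j ∈ S, c i * c j * ⟪v i, v j⟫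
        ≤ ∑ i ∈ S, ∑ j ∈ S, (-(s i * s j) + (if i = j then s i * (1 - z) else 0)) :=
      Finset.sum_le_sum fun i hi => Finset.sum_le_sum fun j hj => hpair i hi j hj
    have e1 : ∑ i ∈ S, ∑ j ∈ S, s i * s j = T * T := by
      rw [hT, Finset.sum_mul_sum]
    have heq : ∑ i ∈ S, ∑ j ∈ S, (-(s i * s j) + (if i = j then s i * (1 - z) else 0))
        = (1 - z) * T - T * T := by
      have step : ∀ i ∈ S, ∑ j ∈ S, (-(s i * s j) + (if i = j then s i * (1 - z) else 0))
          = (∑ j ∈ S, -(s i * s j)) + s i * (1 - z) := by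
        intro i hi
        rw [Finset.sum_add_distrib, Finset.sum_ite_eq S i (fun _ => s i * (1 - z)), if_pos hi]
      rw [Finset.sum_congr rfl step, Finset.sum_add_distrib]
      have e2 : ∑ i ∈ S, ∑ j ∈ S, -(s i * s j) = -(T * T) := by
        rw [← e1, ← Finset.sum_neg_distrib]
        exact Finset.sum_congr rfl fun i _ => by rw [Finset.sum_neg_distrib]
      rw [e2, ← Finset.sum_mul, ← hT]
      ring
    rw [hexp] at hnn
    linarith [hle.trans heq.le]
  have hTle : T ≤ 1 - z := by nlinarith
  have hf1 : f 1 = 1 := by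
    rw [hf]
    rw [if_neg (by nlinarith : ¬ (1:ℝ) < -Real.sqrt z),
      if_neg (by linarith : ¬ (1:ℝ) ≤ z)]
    field_simp
  have hfS : ∀ i ∈ S, f (t i) = -(s i / (1 - z)) := by
    intro i hi
    rw [hf, if_pos ((hmem i).mp hi)]
    simp only [hs]
    field_simp
    ring
  have hrest : ∑ i ∈ Finset.univ.filter (fun i => ¬ t i < -Real.sqrt z), f (t i) = 1 := by
    rw [Finset.sum_eq_single_of_mem (0 : Fin (N+1))]
    · rw [ht0, hf1]
    · simp only [Finset.mem_filter, Finset.mem_univ, true_and, ht0]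
      nlinarith
    · intro i hi hi0
      have h1 : ¬ t i < -Real.sqrt z := (Finset.mem_filter.mp hi).2
      have h2 : t i ≤ z := hts i hi0
      rw [hf, if_neg h1, if_pos h2]
  have hSsum : ∑ i ∈ S, f (t i) = -(T / (1 - z)) := by
    rw [Finset.sum_congr rfl hfS, Finset.sum_neg_distrib, ← Finset.sum_div, ← hT]
  show 0 ≤ ∑ i, f (t i)
  have hsplit : ∑ i, f (t i)
      = (∑ i ∈ S, f (t i))
        + ∑ i ∈ Finset.univ.filter (fun i => ¬ t i < -Real.sqrt z), f (t i) := by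
    rw [hS]
    exact (Finset.sum_filter_add_sum_filter_not _ _ _).symm
  rw [hsplit, hSsum, hrest]
  have : T / (1 - z) ≤ 1 := by rw [div_le_one h1z]; exact hTle
  linarith
end

section
/- Let 0 ≤ z < 1, let N ≥ 1, and let x_1, …, x_N be unit vectors in ℝ^n with ⟨x_i, x_j⟩ = z for all i ≠ j (a regular simplex configuration). Then for every unit vector x_0 in ℝ^n there exists an index i ∈ {1,…,N} such that ⟨x_0, x_i⟩ ≥ -√(z + (1-z)/N). -/
/-!
Summing the `N` vectors gives `s` with `‖s‖² = N (1 - z + N z)`, i.e. `‖s‖ / N = √(z + (1 - z) / N)`.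
By Cauchy–Schwarz `⟪x₀, s⟫ ≥ -‖s‖`, and `⟪x₀, s⟫` is the sum of the `N` numbers `⟪x₀, x i⟫`,
so one of them is at least the average `-‖s‖ / N`.
-/

open scoped RealInnerProductSpace

variable {E ι : Type*} [NormedAddCommGroup E] [InnerProductSpace ℝ E] [Fintype ι]

theorem exists_neg_norm_mul_norm_sum_div_card_le_inner [Nonempty ι] (u : E) (x : ι → E) :
    ∃ i, -(‖u‖ * ‖∑ j, x j‖) / Fintype.card ι ≤ ⟪u, x i⟫ := by
  have hcard : (0 : ℝ) < Fintype.card ι := by exact_mod_cast Fintype.card_pos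
  have hsum : ∑ _i : ι, -(‖u‖ * ‖∑ j, x j‖) / Fintype.card ι ≤ ∑ i, ⟪u, x i⟫ := by
    rw [Finset.sum_const, Finset.card_univ, nsmul_eq_mul, mul_div_cancel₀ _ hcard.ne', ← inner_sum]
    exact neg_le_of_abs_le (abs_real_inner_le_norm u _)
  obtain ⟨i, -, hi⟩ := Finset.exists_le_of_sum_le Finset.univ_nonempty hsum
  exact ⟨i, hi⟩

theorem norm_sum_sq_of_norm_eq_one_of_inner_eq {x : ι → E} {z : ℝ}
    (hx : ∀ i, ‖x i‖ = 1) (hz : ∀ i j, i ≠ j → ⟪x i, x j⟫ = z) :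
    ‖∑ i, x i‖ ^ 2 = Fintype.card ι * (1 - z + Fintype.card ι * z) := by
  classical
  have hgram : ∀ i j, ⟪x i, x j⟫ = z + (1 - z) * if i = j then 1 else 0 := by
    intro i j
    by_cases hij : i = j
    · subst hij
      simp [hx]
    · simp [hz i j hij, hij]
  rw [← real_inner_self_eq_norm_sq, sum_inner]
  simp only [inner_sum, hgram, Finset.sum_add_distrib, ← Finset.mul_sum, Finset.sum_ite_eq,
    Finset.mem_univ, if_true, Finset.sum_const, Finset.card_univ, nsmul_eq_mul]
  ring

theorem simplex_inner_bound_general (n : ℕ) (z : ℝ)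
    (N : ℕ) (hN : 1 ≤ N)
    (x : Fin N → EuclideanSpace ℝ (Fin n))
    (hx : ∀ i, ‖x i‖ = 1)
    (hsimplex : ∀ i j, i ≠ j → ⟪x i, x j⟫ = z)
    (x₀ : EuclideanSpace ℝ (Fin n)) (hx₀ : ‖x₀‖ = 1) :
    ∃ i, ⟪x₀, x i⟫ ≥ -Real.sqrt (z + (1 - z) / N) := by
  have : Nonempty (Fin N) := ⟨⟨0, hN⟩⟩
  have hNpos : (0 : ℝ) < N := by exact_mod_cast hN
  have hnorm : ‖∑ i, x i‖ / N = Real.sqrt (z + (1 - z) / N) := by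
    have hsq := norm_sum_sq_of_norm_eq_one_of_inner_eq hx hsimplex
    rw [Fintype.card_fin] at hsq
    rw [← Real.sqrt_sq (by positivity : 0 ≤ ‖∑ i, x i‖ / N), div_pow, hsq]
    congr 1
    field_simp
    ring
  obtain ⟨i, hi⟩ := exists_neg_norm_mul_norm_sum_div_card_le_inner x₀ x
  rw [hx₀, one_mul, Fintype.card_fin, neg_div, hnorm] at hi
  exact ⟨i, hi⟩

/-- For a regular simplex configuration of unit vectors with pairwise inner product `z`,
every unit vector `x₀` has inner product at least `-√(z + (1-z)/N)` with one of them. -/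
theorem simplex_inner_bound (n : ℕ) (z : ℝ) (hz0 : 0 ≤ z) (hz1 : z < 1)
    (N : ℕ) (hN : 1 ≤ N)
    (x : Fin N → EuclideanSpace ℝ (Fin n))
    (hx : ∀ i, ‖x i‖ = 1)
    (hsimplex : ∀ i j, i ≠ j → ⟪x i, x j⟫ = z)
    (x₀ : EuclideanSpace ℝ (Fin n)) (hx₀ : ‖x₀‖ = 1) :
    ∃ i, ⟪x₀, x i⟫ ≥ -Real.sqrt (z + (1 - z) / N) :=
  simplex_inner_bound_general n z N hN x hx hsimplex x₀ hx₀
end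

section
/- Let 0 ≤ z < 1 (write z = cos α) and define f_α : [-1,1] → ℝ by f_α(t) = (z - t²)/(1 - z) if t < -√z, f_α(t) = 0 if -√z ≤ t ≤ z, and f_α(t) = (t - z)/(1 - z) if t > z. Then for every n ≥ 1 and every spherical (n,N,α)-code x_1, …, x_N (unit vectors in ℝ^n with ⟨x_i,x_j⟩ ≤ z for i ≠ j), the N×N matrix M with entries M_{ij} = f_α(⟨x_i, x_j⟩) is symmetric and positive semidefinite. -/
open scoped RealInnerProductSpace BigOperators

open Finset

/-- Key row-sum bound: the sum of absolute values of the off-diagonal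
entries in each row of the matrix `(f ⟪x i, x j⟫)` is at most `1`. -/
lemma falpha_row_sum_le (z : ℝ) (hz0 : 0 ≤ z) (hz1 : z < 1)
    (f : ℝ → ℝ)
    (hf : ∀ t : ℝ, f t =
      if t < -Real.sqrt z then (z - t ^ 2) / (1 - z)
      else if t ≤ z then 0 else (t - z) / (1 - z))
    {n N : ℕ} (x : Fin N → EuclideanSpace ℝ (Fin n))
    (hx : ∀ i, ‖x i‖ = 1)
    (hsep : ∀ i j, i ≠ j → ⟪x i, x j⟫ ≤ z) (k : Fin N) :
    ∑ j ∈ Finset.univ.erase k, |f ⟪x k, x j⟫| ≤ 1 := by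
  classical
  have h1z : (0:ℝ) < 1 - z := by linarith
  set t : Fin N → ℝ := fun j => ⟪x k, x j⟫ with ht
  set S : Finset (Fin N) :=
    (Finset.univ.erase k).filter (fun j => t j < -Real.sqrt z) with hS
  have htneg : ∀ j ∈ S, t j < 0 := fun j hj =>
    lt_of_lt_of_le ((Finset.mem_filter.1 hj).2)
      (neg_nonpos.mpr (Real.sqrt_nonneg z))
  have htsq : ∀ j ∈ S, z < t j ^ 2 := by
    intro j hj
    have h := (Finset.mem_filter.1 hj).2
    have h2 : Real.sqrt z < -t j := by linarith
    nlinarith [Real.sqrt_nonneg z, Real.sq_sqrt hz0]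
  -- Rewrite the row sum as a sum over `S`.
  have hsum : (∑ j ∈ Finset.univ.erase k, |f (t j)|)
      = ∑ j ∈ S, (t j ^ 2 - z) / (1 - z) := by
    rw [hS, Finset.sum_filter]
    apply Finset.sum_congr rfl
    intro j hj
    have hjk : k ≠ j := fun h => (Finset.ne_of_mem_erase hj) h.symm
    have hjz : t j ≤ z := hsep k j hjk
    by_cases h : t j < -Real.sqrt z
    · rw [if_pos h, hf, if_pos h]
      have hz2 : z < t j ^ 2 := by
        have h2 : Real.sqrt z < -t j := by linarith
        nlinarith [Real.sqrt_nonneg z, Real.sq_sqrt hz0]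
      rw [abs_of_nonpos (div_nonpos_of_nonpos_of_nonneg (by linarith) h1z.le),
        ← neg_div, neg_sub]
    · rw [if_neg h, hf, if_neg h, if_pos hjz, abs_zero]
  rw [hsum, ← Finset.sum_div, div_le_one h1z]
  -- Main geometric estimate: `∑_{j ∈ S} (t j ^ 2 - z) ≤ 1 - z`.
  rcases S.eq_empty_or_nonempty with hSe | ⟨j0, hj0⟩
  · simp [hSe]; linarith
  set A : ℝ := ∑ j ∈ S, t j ^ 2 with hA
  set B : ℝ := ∑ j ∈ S, t j with hB
  set m : ℝ := (S.card : ℝ) with hm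
  have hApos : 0 < A := by
    refine Finset.sum_pos' (fun j _ => sq_nonneg _) ⟨j0, hj0, ?_⟩
    have h := htneg j0 hj0
    nlinarith
  have hBA : B ^ 2 ≤ m * A := sq_sum_le_card_mul_sum_sq
  set v : EuclideanSpace ℝ (Fin n) := ∑ j ∈ S, t j • x j with hv
  have hvA : ⟪v, x k⟫ = A := by
    rw [hv, sum_inner]
    apply Finset.sum_congr rfl
    intro j hj
    rw [real_inner_smul_left, real_inner_comm]
    ring
  have hCS : A ^ 2 ≤ ‖v‖ ^ 2 := by
    have h := abs_real_inner_le_norm v (x k)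
    have h2 : ⟪v, x k⟫ ^ 2 ≤ (‖v‖ * ‖x k‖) ^ 2 := by
      rw [← sq_abs]
      exact pow_le_pow_left₀ (abs_nonneg _) h 2
    rw [hvA, hx k, mul_one] at h2
    exact h2
  have hvexp : ‖v‖ ^ 2 ≤ z * B ^ 2 + (1 - z) * A := by
    have hexp : ‖v‖ ^ 2 = ∑ j ∈ S, ∑ j' ∈ S, (t j * t j') * ⟪x j, x j'⟫ := by
      rw [← real_inner_self_eq_norm_sq, hv, sum_inner]
      apply Finset.sum_congr rfl
      intro j _
      rw [inner_sum]
      apply Finset.sum_congr rfl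
      intro j' _
      rw [real_inner_smul_left, real_inner_smul_right]
      ring
    have hbound : ∑ j ∈ S, ∑ j' ∈ S, (t j * t j') * ⟪x j, x j'⟫
        ≤ ∑ j ∈ S, ∑ j' ∈ S,
          (z * (t j * t j') + if j' = j then (1 - z) * t j ^ 2 else 0) := by
      refine Finset.sum_le_sum fun j hj => Finset.sum_le_sum fun j' hj' => ?_
      by_cases hjj : j' = j
      · subst hjj
        have : ⟪x j', x j'⟫ = 1 := by
          rw [real_inner_self_eq_norm_sq, hx j']; norm_num
        rw [this, if_pos rfl]
        ring_nf
        nlinarith []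
      · rw [if_neg hjj]
        have hnn : 0 ≤ t j * t j' := by
          nlinarith [htneg j hj, htneg j' hj']
        have := hsep j j' (fun h => hjj h.symm)
        nlinarith [hnn]
    have hrhs : ∑ j ∈ S, ∑ j' ∈ S,
        (z * (t j * t j') + if j' = j then (1 - z) * t j ^ 2 else 0)
        = z * B ^ 2 + (1 - z) * A := by
      have hB2 : B ^ 2 = ∑ j ∈ S, ∑ j' ∈ S, t j * t j' := by
        rw [sq, hB, Finset.sum_mul_sum]
      rw [hB2, hA, Finset.mul_sum, Finset.mul_sum, ← Finset.sum_add_distrib]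
      refine Finset.sum_congr rfl fun j hj => ?_
      rw [Finset.sum_add_distrib, Finset.sum_ite_eq' S j, if_pos hj, Finset.mul_sum]
    rw [hexp]
    rw [hrhs] at hbound
    exact hbound
  have hAle : A ≤ z * m + (1 - z) := by
    have h1 : A ^ 2 ≤ (z * m + (1 - z)) * A := by nlinarith
    nlinarith
  have hsplit : ∑ j ∈ S, (t j ^ 2 - z) = A - z * m := by
    rw [Finset.sum_sub_distrib, Finset.sum_const, nsmul_eq_mul]
    ring
  linarith [hsplit, hAle]

/-- The matrix `(f_α(⟨x_i,x_j⟩))` of a spherical `(n,N,α)`-code is symmetric and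
positive semidefinite. -/
theorem falpha_matrix_posSemidef (z : ℝ) (hz0 : 0 ≤ z) (hz1 : z < 1)
    (f : ℝ → ℝ)
    (hf : ∀ t : ℝ, f t =
      if t < -Real.sqrt z then (z - t ^ 2) / (1 - z)
      else if t ≤ z then 0 else (t - z) / (1 - z))
    (n N : ℕ) (hn : 1 ≤ n)
    (x : Fin N → EuclideanSpace ℝ (Fin n))
    (hx : ∀ i, ‖x i‖ = 1)
    (hsep : ∀ i j, i ≠ j → ⟪x i, x j⟫ ≤ z) :
    (Matrix.of fun i j => f ⟪x i, x j⟫).IsSymm ∧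
      (Matrix.of fun i j => f ⟪x i, x j⟫).PosSemidef := by
  classical
  set M : Matrix (Fin N) (Fin N) ℝ := Matrix.of fun i j => f ⟪x i, x j⟫ with hM
  have hsymm : M.IsSymm := by
    ext i j
    simp only [hM, Matrix.transpose_apply, Matrix.of_apply]
    rw [real_inner_comm]
  have hherm : M.IsHermitian := by
    rw [Matrix.IsHermitian]
    ext i j
    simp only [hM, Matrix.conjTranspose_apply, Matrix.of_apply, star_trivial]
    rw [real_inner_comm]
  refine ⟨hsymm, (Matrix.IsHermitian.posSemidef_iff_eigenvalues_nonneg hherm).mpr fun i => ?_⟩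
  set μ : ℝ := hherm.eigenvalues i with hμ
  have hmem : μ ∈ spectrum ℝ M := hherm.eigenvalues_mem_spectrum_real i
  have heig : Module.End.HasEigenvalue (Matrix.toLin' M) μ := by
    have h1 : spectrum ℝ (Matrix.toLinAlgEquiv (Pi.basisFun ℝ (Fin N)) M)
        = spectrum ℝ M := AlgEquiv.spectrum_eq _ M
    have h2 : Matrix.toLinAlgEquiv (Pi.basisFun ℝ (Fin N)) M = Matrix.toLin' M := by
      rw [Matrix.toLinAlgEquiv, ← Matrix.toLin_eq_toLin']
      rfl
    rw [Module.End.hasEigenvalue_iff_mem_spectrum, ← h2, h1]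
    exact hmem
  obtain ⟨k, hk⟩ := eigenvalue_mem_ball heig
  rw [Metric.mem_closedBall, Real.dist_eq] at hk
  have hdiag : M k k = 1 := by
    have h1 : ⟪x k, x k⟫ = 1 := by
      rw [real_inner_self_eq_norm_sq, hx k]; norm_num
    simp only [hM, Matrix.of_apply, h1, hf]
    rw [if_neg (by nlinarith [Real.sqrt_nonneg z]), if_neg (by linarith)]
    rw [div_self (by linarith)]
  have hrow : ∑ j ∈ Finset.univ.erase k, ‖M k j‖ ≤ 1 := by
    have := falpha_row_sum_le z hz0 hz1 f hf x hx hsep k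
    simpa only [hM, Matrix.of_apply, Real.norm_eq_abs] using this
  rw [hdiag] at hk
  have := abs_le.1 hk
  linarith [this.1, (Pi.zero_apply i : (0 : Fin N → ℝ) i = 0)]
end
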